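/- Let L ∈ ℝ^{n×n} be symmetric positive semidefinite, M > 0, D > 0, and set A = [[0_n, I_n], [−(1/M)L, −(D/M)I_n]], F = [0_n; (1/M)I_n], C = [0_n, I_n]. Then the symmetric matrix P = [[(1/(2D))L, 0_n], [0_n, (M/(2D))I_n]] satisfies the Lyapunov equation P·A + Aᵀ·P = −CᵀC, and trace(Fᵀ P F) = n/(2DM). (Thus the H₂ norm of the swing dynamics with frequency output is √(n/(2DM)), a decreasing function of both inertia and damping, independent of the network topology.) -/

import Mathlib

open Matrix

/-- The swing-dynamics state matrix `A = [[0, I], [−(1/M)L, −(D/M)I]]`. -/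
noncomputable def swingA (n : ℕ) (M D : ℝ) (L : Matrix (Fin n) (Fin n) ℝ) :
    Matrix (Fin n ⊕ Fin n) (Fin n ⊕ Fin n) ℝ :=
  Matrix.fromBlocks 0 1 (-(1 / M) • L) (-(D / M) • 1)

/-- The swing-dynamics input matrix `F = [0; (1/M)I]`. -/
noncomputable def swingF (n : ℕ) (M : ℝ) : Matrix (Fin n ⊕ Fin n) (Fin n) ℝ :=
  Matrix.fromRows 0 ((1 / M) • 1)

/-- The frequency output matrix `C = [0, I]`. -/
def swingCfreq (n : ℕ) : Matrix (Fin n) (Fin n ⊕ Fin n) ℝ :=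
  Matrix.fromCols 0 1

/-- The candidate observability Gramian
`P = [[(1/(2D))L, 0], [0, (M/(2D))I]]`. -/
noncomputable def swingPfreq (n : ℕ) (M D : ℝ)
    (L : Matrix (Fin n) (Fin n) ℝ) :
    Matrix (Fin n ⊕ Fin n) (Fin n ⊕ Fin n) ℝ :=
  Matrix.fromBlocks ((1 / (2 * D)) • L) 0 0 ((M / (2 * D)) • 1)

/-!
For block-diagonal symmetric `P = diag(a K, b I)` and `A = [[0, I], [-c K, -d I]]` with `K`
symmetric, `Aᵀ P = (P A)ᵀ` and `P A = [[0, a K], [-b c K, -b d I]]`, so `P A + Aᵀ P` has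
off-diagonal blocks `±(a - b c) K` and lower-right block `-2 b d I`. The swing parameters
`a = 1/(2D)`, `b = M/(2D)`, `c = 1/M`, `d = D/M` give `b c = a` and `2 b d = 1`, which is exactly
`-CᵀC = -diag(0, I)`. Since `F` vanishes on the angle block, `FᵀPF = (1/M)² (M/(2D)) I`.
-/

section SecondOrder

variable {ι R : Type*} [Fintype ι] [DecidableEq ι] [CommRing R]

theorem fromBlocks_smul_mul_companion (K : Matrix ι ι R) (a b c d : R) :
    fromBlocks (a • K) 0 0 (b • 1) * fromBlocks 0 1 (-c • K) (-d • (1 : Matrix ι ι R)) =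
      fromBlocks 0 (a • K) (-(b * c) • K) (-(b * d) • 1) := by
  simp [fromBlocks_multiply, smul_smul, mul_comm]

theorem transpose_fromCols_zero_one_mul :
    (fromCols (0 : Matrix ι ι R) 1)ᵀ * fromCols (0 : Matrix ι ι R) 1 =
      fromBlocks 0 0 0 (1 : Matrix ι ι R) := by
  rw [transpose_fromCols, fromRows_mul_fromCols]
  simp

theorem lyapunov_companion {K : Matrix ι ι R} (hK : Kᵀ = K) {a b c d : R}
    (hbc : b * c = a) (hbd : 2 * (b * d) = 1) :
    fromBlocks (a • K) 0 0 (b • 1) * fromBlocks 0 1 (-c • K) (-d • (1 : Matrix ι ι R)) +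
        (fromBlocks 0 1 (-c • K) (-d • 1))ᵀ * fromBlocks (a • K) 0 0 (b • 1) =
      -((fromCols (0 : Matrix ι ι R) 1)ᵀ * fromCols (0 : Matrix ι ι R) 1) := by
  have hP : (fromBlocks (a • K) 0 0 (b • (1 : Matrix ι ι R)))ᵀ =
      fromBlocks (a • K) 0 0 (b • 1) := by
    simp [fromBlocks_transpose, hK]
  rw [← hP, ← transpose_mul, hP, fromBlocks_smul_mul_companion, fromBlocks_transpose,
    fromBlocks_add, transpose_fromCols_zero_one_mul, fromBlocks_neg]
  have hI : -((b * d) • (1 : Matrix ι ι R)) + -((b * d) • 1) = -1 := by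
    linear_combination (norm := module) -hbd • (1 : Matrix ι ι R)
  simp [hK, hbc, hI]

end SecondOrder

theorem transpose_fromRows_zero_mul_fromBlocks_mul {m n o R : Type*} [Fintype m] [Fintype n]
    [Semiring R] (G : Matrix n o R) (P₁₁ : Matrix m m R) (P₁₂ : Matrix m n R)
    (P₂₁ : Matrix n m R) (P₂₂ : Matrix n n R) :
    (fromRows (0 : Matrix m o R) G)ᵀ * fromBlocks P₁₁ P₁₂ P₂₁ P₂₂ *
        fromRows (0 : Matrix m o R) G = Gᵀ * P₂₂ * G := by
  rw [transpose_fromRows, fromCols_mul_fromBlocks, fromCols_mul_fromRows]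
  simp

/-- Observability Gramian computation for the swing dynamics with frequency
output: `P` satisfies the Lyapunov equation `PA + AᵀP = −CᵀC` and
`trace(FᵀPF) = n/(2DM)`.  Hence the H₂ norm with frequency output is
`√(n/(2DM))`, a decreasing function of both inertia and damping, independent
of the network topology. -/
theorem swing_freq_H2_gramian (n : ℕ) (M D : ℝ) (hM : 0 < M) (hD : 0 < D)
    (L : Matrix (Fin n) (Fin n) ℝ) (hL : L.PosSemidef) :
    swingPfreq n M D L * swingA n M D L + (swingA n M D L)ᵀ * swingPfreq n M D L =
      -((swingCfreq n)ᵀ * swingCfreq n) ∧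
    ((swingF n M)ᵀ * swingPfreq n M D L * swingF n M).trace = n / (2 * D * M) := by
  constructor
  · refine lyapunov_companion hL.1.eq ?_ ?_ <;> field_simp
  · rw [swingF, swingPfreq, transpose_fromRows_zero_mul_fromBlocks_mul]
    simp only [transpose_smul, transpose_one, smul_mul, Matrix.one_mul, trace_smul, trace_one,
      Fintype.card_fin, smul_eq_mul]
    field_simp
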